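/- arXiv:2603.21757 — 3 statements merged into one kernel-verified Lean document; each statement's English description precedes it below -/
import Mathlib

section
/- Let U(θ) be an n-qubit parametrized quantum circuit whose generator spectra L_1, …, L_K have integer differences (λ − μ ∈ ℤ for all λ, μ ∈ L_k and all k). Then for every Hermitian observable O on H = ℂ^{2^n}, the objective f(θ) = ⟨0| U(θ)† O U(θ) |0⟩ is a Hermitian trigonometric polynomial: f(θ) = Σ_{α ∈ Aᵀ(ΔL)} f_α exp(i⟨α, θ⟩) for all θ ∈ ℝ^M, where every frequency α ∈ Aᵀ(ΔL) is an integer vector, f_α = Σ_{λ₊, λ₋ ∈ L, Aᵀ(λ₊ − λ₋) = α} ⟨0| P_{λ₊}† O P_{λ₋} |0⟩, and f_{−α} = conj(f_α) for all α. -/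
open Matrix

open scoped Nat

section Aux

variable {N : ℕ}

lemma aux_pow (L : Finset ℝ) (P : ℝ → Matrix (Fin N) (Fin N) ℂ)
    (hproj : ∀ l ∈ L, ∀ m ∈ L, P l * P m = if l = m then P l else 0)
    (a : ℝ → ℂ) (d : ℕ) :
    (∑ l ∈ L, a l • P l) ^ (d + 1) = ∑ l ∈ L, a l ^ (d + 1) • P l := by
  induction d with
  | zero => simp
  | succ d ih =>
    rw [pow_succ, ih, Finset.sum_mul_sum]
    refine Finset.sum_congr rfl fun l hl => ?_
    rw [Finset.sum_eq_single l]
    · rw [smul_mul_smul_comm, hproj l hl l hl, if_pos rfl, ← pow_succ]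
    · intro m hm hne
      rw [smul_mul_smul_comm, hproj l hl m hm, if_neg (Ne.symm hne), smul_zero]
    · intro h; exact absurd hl h

lemma aux_exp (L : Finset ℝ) (P : ℝ → Matrix (Fin N) (Fin N) ℂ)
    (hsum : ∑ l ∈ L, P l = 1)
    (hproj : ∀ l ∈ L, ∀ m ∈ L, P l * P m = if l = m then P l else 0)
    (a : ℝ → ℂ) :
    NormedSpace.exp (∑ l ∈ L, a l • P l) = ∑ l ∈ L, Complex.exp (a l) • P l := by
  letI : SeminormedRing (Matrix (Fin N) (Fin N) ℂ) := Matrix.linftyOpSemiNormedRing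
  letI : NormedRing (Matrix (Fin N) (Fin N) ℂ) := Matrix.linftyOpNormedRing
  letI : NormedAlgebra ℂ (Matrix (Fin N) (Fin N) ℂ) := Matrix.linftyOpNormedAlgebra
  set X := ∑ l ∈ L, a l • P l with hX
  have hsummable : Summable (fun nn : ℕ => (nn ! : ℂ)⁻¹ • X ^ nn) :=
    NormedSpace.expSeries_summable' X
  have hsc : ∀ c : ℂ, Summable (fun nn : ℕ => ((nn+1)! : ℂ)⁻¹ * c ^ (nn+1)) := by
    intro c
    have h0 : Summable (fun nn : ℕ => (nn ! : ℂ)⁻¹ • c ^ nn) :=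
      NormedSpace.expSeries_summable' c
    have hinj : Function.Injective (fun nn : ℕ => nn + 1) := fun x y h => by
      simpa using h
    exact h0.comp_injective hinj
  have hscalar : ∀ c : ℂ, ∑' nn : ℕ, ((nn+1)! : ℂ)⁻¹ * c ^ (nn+1) = Complex.exp c - 1 := by
    intro c
    have h0 : Summable (fun nn : ℕ => (nn ! : ℂ)⁻¹ • c ^ nn) :=
      NormedSpace.expSeries_summable' c
    have he : Complex.exp c = ∑' nn : ℕ, (nn ! : ℂ)⁻¹ • c ^ nn := by
      rw [Complex.exp_eq_exp_ℂ, NormedSpace.exp_eq_tsum ℂ]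
    rw [Summable.tsum_eq_zero_add h0] at he
    simp only [pow_zero, Nat.factorial_zero, Nat.cast_one, inv_one, one_smul, smul_eq_mul] at he
    rw [he]; ring
  rw [NormedSpace.exp_eq_tsum ℂ]
  show (∑' nn : ℕ, (nn ! : ℂ)⁻¹ • X ^ nn) = _
  rw [Summable.tsum_eq_zero_add hsummable]
  simp only [pow_zero, Nat.factorial_zero, Nat.cast_one, inv_one, one_smul]
  have h1 : (fun nn : ℕ => ((nn+1)! : ℂ)⁻¹ • X ^ (nn+1))
      = fun nn : ℕ => ∑ l ∈ L, (((nn+1)! : ℂ)⁻¹ * a l ^ (nn+1)) • P l := by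
    funext nn
    rw [aux_pow L P hproj a nn, Finset.smul_sum]
    exact Finset.sum_congr rfl fun l _ => (smul_smul _ _ _)
  rw [h1, Summable.tsum_finsetSum (fun l _ => ((hsc (a l)).smul_const (P l)))]
  have h2 : ∀ l ∈ L, (∑' nn : ℕ, (((nn+1)! : ℂ)⁻¹ * a l ^ (nn+1)) • P l)
      = (Complex.exp (a l) - 1) • P l := by
    intro l _
    rw [Summable.tsum_smul_const (hsc (a l)), hscalar (a l)]
  rw [Finset.sum_congr rfl h2]
  simp only [sub_smul, one_smul, Finset.sum_sub_distrib, hsum]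
  abel

lemma revProd_succ {R : Type*} [Monoid R] {K : ℕ} (g : Fin (K+1) → R) :
    (List.ofFn g).reverse.prod
      = (List.ofFn fun i : Fin K => g i.succ).reverse.prod * g 0 := by
  rw [List.ofFn_succ, List.reverse_cons, List.prod_append, List.prod_singleton]

lemma revProd_smul : ∀ {K : ℕ} (c : Fin K → ℂ) (B : Fin K → Matrix (Fin N) (Fin N) ℂ),
    (List.ofFn fun k => c k • B k).reverse.prod
      = (∏ k, c k) • (List.ofFn B).reverse.prod
  | 0, c, B => by simp
  | (K+1), c, B => by
    rw [revProd_succ, revProd_succ B,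
      revProd_smul (fun i => c i.succ) (fun i => B i.succ),
      smul_mul_smul_comm, Fin.prod_univ_succ, mul_comm (c 0)]

lemma prod_sum_expand : ∀ {K : ℕ} (S : Fin K → Finset ℝ)
    (F : (k : Fin K) → ℝ → Matrix (Fin N) (Fin N) ℂ),
    (List.ofFn fun k => ∑ x ∈ S k, F k x).reverse.prod
      = ∑ g ∈ Fintype.piFinset S, (List.ofFn fun k => F k (g k)).reverse.prod
  | 0, S, F => by simp
  | (K+1), S, F => by
    rw [revProd_succ, prod_sum_expand (fun i => S i.succ) (fun i => F i.succ),
      Finset.sum_mul_sum]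
    have hmap : Fintype.piFinset S
        = (S 0 ×ˢ Fintype.piFinset (fun i => S i.succ)).map
          (Fin.consEquiv fun _ => ℝ).toEmbedding := by
      have := Finset.filter_piFinset_eq_map_consEquiv S (fun _ => True)
      simp at this; exact this
    rw [hmap, Finset.sum_map, Finset.sum_product, Finset.sum_comm]
    refine Finset.sum_congr rfl fun g hg => Finset.sum_congr rfl fun x hx => ?_
    rw [revProd_succ]
    simp [Fin.consEquiv]

end Aux

/-- if the generator spectra of a PQC have integer differences, then for every
Hermitian observable `O`, the objective `f(θ) = ⟨0| U(θ)† O U(θ) |0⟩` is a Hermitian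
trigonometric polynomial: `f(θ) = Σ_{α ∈ Aᵀ(ΔL)} f_α exp(i⟨α, θ⟩)`, every frequency
`α ∈ Aᵀ(ΔL)` is an integer vector,
`f_α = Σ_{λ₊, λ₋ ∈ L, Aᵀ(λ₊-λ₋) = α} ⟨0| P_{λ₊}† O P_{λ₋} |0⟩`, and `f_{-α} = conj (f_α)`.
Ordered products are encoded as `(List.ofFn g).reverse.prod`; `⟨0| X |0⟩` is the entry of `X`
at the basis index `i0` with `(i0 : ℕ) = 0`. -/
theorem stmt3 (n K M : ℕ)
    (V C : Fin K → Matrix (Fin (2 ^ n)) (Fin (2 ^ n)) ℂ)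
    (hV : ∀ k, (V k).IsHermitian)
    (hC : ∀ k, C k ∈ Matrix.unitaryGroup (Fin (2 ^ n)) ℂ)
    (jk : Fin K → Fin M)
    (A : Fin K → Fin M → ℝ)
    (hA : ∀ k m, A k m = if m = jk k then 1 else 0)
    (L : Fin K → Finset ℝ)
    (hint : ∀ k, ∀ lam ∈ L k, ∀ mu ∈ L k, ∃ z : ℤ, lam - mu = (z : ℝ))
    (P : Fin K → ℝ → Matrix (Fin (2 ^ n)) (Fin (2 ^ n)) ℂ)
    (hPsum : ∀ k, ∑ lam ∈ L k, P k lam = 1)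
    (hPproj : ∀ k, ∀ lam ∈ L k, ∀ mu ∈ L k,
      P k lam * P k mu = if lam = mu then P k lam else 0)
    (hPherm : ∀ k, ∀ lam ∈ L k, (P k lam).IsHermitian)
    (hVP : ∀ k, V k = ∑ lam ∈ L k, (lam : ℂ) • P k lam)
    (U : (Fin M → ℝ) → Matrix (Fin (2 ^ n)) (Fin (2 ^ n)) ℂ)
    (hU : ∀ θ : Fin M → ℝ, U θ = ((List.ofFn fun k : Fin K =>
      NormedSpace.exp ((-(Complex.I * (θ (jk k) : ℂ))) • V k) * C k).reverse).prod)
    (O : Matrix (Fin (2 ^ n)) (Fin (2 ^ n)) ℂ) (hO : O.IsHermitian)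
    (i0 : Fin (2 ^ n)) (hi0 : (i0 : ℕ) = 0)
    (f : (Fin M → ℝ) → ℂ)
    (hf : ∀ θ : Fin M → ℝ, f θ = ((U θ)ᴴ * O * U θ) i0 i0)
    (fcoef : (Fin M → ℝ) → ℂ)
    (hfcoef : ∀ α : Fin M → ℝ, fcoef α =
      ∑ p ∈ ((Fintype.piFinset L) ×ˢ (Fintype.piFinset L)).filter
          (fun p => (fun m => ∑ k, A k m * (p.1 k - p.2 k)) = α),
        ((((List.ofFn fun k : Fin K => P k (p.1 k) * C k).reverse).prod)ᴴ * O *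
          ((List.ofFn fun k : Fin K => P k (p.2 k) * C k).reverse).prod) i0 i0) :
    (∀ α ∈ ((Fintype.piFinset L) ×ˢ (Fintype.piFinset L)).image
        (fun p => fun m => ∑ k, A k m * (p.1 k - p.2 k)),
      ∃ γ : Fin M → ℤ, α = fun m => ((γ m : ℤ) : ℝ)) ∧
    (∀ θ : Fin M → ℝ,
      f θ = ∑ α ∈ ((Fintype.piFinset L) ×ˢ (Fintype.piFinset L)).image
          (fun p => fun m => ∑ k, A k m * (p.1 k - p.2 k)),
        fcoef α * Complex.exp (Complex.I * ((∑ m, α m * θ m : ℝ) : ℂ))) ∧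
    (∀ α : Fin M → ℝ, fcoef (-α) = (starRingEnd ℂ) (fcoef α)) := by
  -- abbreviations
  set XP : (Fin K → ℝ) → Matrix (Fin (2 ^ n)) (Fin (2 ^ n)) ℂ :=
    fun g => (List.ofFn fun k => P k (g k) * C k).reverse.prod with hXP
  have hconjE : ∀ X Y : Matrix (Fin (2 ^ n)) (Fin (2 ^ n)) ℂ,
      (Xᴴ * O * Y) i0 i0 = (starRingEnd ℂ) ((Yᴴ * O * X) i0 i0) := by
    intro X Y
    have h1 : (Yᴴ * O * X)ᴴ = Xᴴ * O * Y := by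
      rw [conjTranspose_mul, conjTranspose_mul, conjTranspose_conjTranspose, hO.eq,
        ← Matrix.mul_assoc]
    rw [← h1, conjTranspose_apply, starRingEnd_apply]
  refine ⟨?_, ?_, ?_⟩
  · -- integer frequencies
    intro α hα
    rw [Finset.mem_image] at hα
    obtain ⟨p, hp, rfl⟩ := hα
    rw [Finset.mem_product] at hp
    choose z hz using fun k =>
      hint k (p.1 k) (Fintype.mem_piFinset.1 hp.1 k) (p.2 k) (Fintype.mem_piFinset.1 hp.2 k)
    refine ⟨fun m => ∑ k, if m = jk k then z k else 0, ?_⟩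
    funext m
    push_cast
    refine Finset.sum_congr rfl fun k _ => ?_
    rw [hA, hz k]
    split_ifs <;> simp
  · -- Fourier expansion
    intro θ
    -- expansion of a single factor
    have hfac : (fun k : Fin K =>
        NormedSpace.exp ((-(Complex.I * (θ (jk k) : ℂ))) • V k) * C k)
        = fun k => ∑ l ∈ L k,
            Complex.exp (-(Complex.I * (θ (jk k) : ℂ)) * (l : ℂ)) • (P k l * C k) := by
      funext k
      rw [hVP k, Finset.smul_sum]
      simp_rw [smul_smul]
      rw [aux_exp (L k) (P k) (hPsum k) (hPproj k)
        (fun l => -(Complex.I * (θ (jk k) : ℂ)) * (l : ℂ)), Finset.sum_mul]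
      simp_rw [smul_mul_assoc]
    have hUexp : U θ = ∑ g ∈ Fintype.piFinset L,
        (∏ k, Complex.exp (-(Complex.I * (θ (jk k) : ℂ)) * (g k : ℂ))) • XP g := by
      rw [hU θ, hfac, prod_sum_expand]
      exact Finset.sum_congr rfl fun g _ => revProd_smul _ _
    have hphase : ∀ g h : Fin K → ℝ,
        (starRingEnd ℂ) (∏ k, Complex.exp (-(Complex.I * (θ (jk k) : ℂ)) * (g k : ℂ)))
          * (∏ k, Complex.exp (-(Complex.I * (θ (jk k) : ℂ)) * (h k : ℂ)))
        = Complex.exp (Complex.I *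
            ((∑ m, (∑ k, A k m * (g k - h k)) * θ m : ℝ) : ℂ)) := by
      intro g h
      have hreal : (∑ m, (∑ k, A k m * (g k - h k)) * θ m)
          = ∑ k, (g k - h k) * θ (jk k) := by
        simp_rw [hA, Finset.sum_mul]
        rw [Finset.sum_comm]
        refine Finset.sum_congr rfl fun k _ => ?_
        rw [Finset.sum_eq_single (jk k)]
        · simp
        · intro m _ hne; rw [if_neg hne]; ring
        · intro h; exact absurd (Finset.mem_univ _) h
      rw [map_prod, ← Finset.prod_mul_distrib]
      simp_rw [← Complex.exp_conj, ← Complex.exp_add, ← Complex.exp_sum]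
      congr 1
      rw [hreal]
      push_cast
      rw [Finset.mul_sum]
      refine Finset.sum_congr rfl fun k _ => ?_
      simp only [_root_.map_mul, map_neg, Complex.conj_I, Complex.conj_ofReal]
      ring
    have key : f θ = ∑ p ∈ (Fintype.piFinset L) ×ˢ (Fintype.piFinset L),
        Complex.exp (Complex.I *
            ((∑ m, (∑ k, A k m * (p.1 k - p.2 k)) * θ m : ℝ) : ℂ))
          * ((XP p.1)ᴴ * O * XP p.2) i0 i0 := by
      rw [hf θ, hUexp, conjTranspose_sum]
      simp only [conjTranspose_smul, Finset.sum_mul, Finset.mul_sum, smul_mul_assoc,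
        mul_smul_comm, smul_smul, Matrix.sum_apply, Matrix.smul_apply, smul_eq_mul]
      rw [Finset.sum_comm, ← Finset.sum_product']
      refine Finset.sum_congr rfl fun p hp => ?_
      have harg : (∑ x : Fin M, ∑ i : Fin K, A i x * (p.1 i - p.2 i) * θ x)
          = ∑ m, (∑ k, A k m * (p.1 k - p.2 k)) * θ m := by
        refine Finset.sum_congr rfl fun m _ => ?_
        rw [Finset.sum_mul]
      rw [harg, ← hphase p.1 p.2, starRingEnd_apply]
      ring
    rw [key, ← Finset.sum_fiberwise_of_maps_to
      (fun p hp => Finset.mem_image_of_mem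
        (fun p => fun m => ∑ k, A k m * (p.1 k - p.2 k)) hp)]
    refine Finset.sum_congr rfl fun α hα => ?_
    rw [hfcoef α, Finset.sum_mul]
    refine Finset.sum_congr rfl fun p hp => ?_
    have hpe : (fun m => ∑ k, A k m * (p.1 k - p.2 k)) = α := (Finset.mem_filter.1 hp).2
    have hm : ∀ m, (∑ k, A k m * (p.1 k - p.2 k)) = α m := fun m => congrFun hpe m
    rw [Finset.sum_congr rfl (fun m _ => by rw [hm m] :
      ∀ m ∈ Finset.univ, (∑ k, A k m * (p.1 k - p.2 k)) * θ m = α m * θ m)]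
    ring
  · -- Hermitian symmetry of coefficients
    intro α
    rw [hfcoef, hfcoef, map_sum]
    have hneg : ∀ p : (Fin K → ℝ) × (Fin K → ℝ),
        (fun m => ∑ k, A k m * (p.2 k - p.1 k))
          = -(fun m => ∑ k, A k m * (p.1 k - p.2 k)) := by
      intro p
      funext m
      simp only [Pi.neg_apply, ← Finset.sum_neg_distrib]
      exact Finset.sum_congr rfl fun k _ => by ring
    refine Finset.sum_nbij' (i := Prod.swap) (j := Prod.swap) ?_ ?_ ?_ ?_ ?_
    · intro p hp
      rw [Finset.mem_filter] at hp ⊢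
      refine ⟨Finset.mem_product.2 ⟨(Finset.mem_product.1 hp.1).2,
        (Finset.mem_product.1 hp.1).1⟩, ?_⟩
      show (fun m => ∑ k, A k m * (p.2 k - p.1 k)) = α
      rw [hneg p, hp.2, neg_neg]
    · intro p hp
      rw [Finset.mem_filter] at hp ⊢
      refine ⟨Finset.mem_product.2 ⟨(Finset.mem_product.1 hp.1).2,
        (Finset.mem_product.1 hp.1).1⟩, ?_⟩
      show (fun m => ∑ k, A k m * (p.2 k - p.1 k)) = -α
      rw [hneg p, hp.2]
    · intro p _; exact Prod.swap_swap p
    · intro p _; exact Prod.swap_swap p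
    · intro p hp
      exact hconjE _ _
end

section
/- Let f be a Hermitian trigonometric polynomial with frequencies in the box K = {α ∈ ℤ^M : |α_j| ≤ d_j for all j}, let S be the uniform sampling grid with N_j = 2 d_j + 1 points per coordinate, and let ε > 0. Suppose f̃ : S → ℝ satisfies |f̃(φ) − f(φ)| ≤ ε/(2|K|) for all φ ∈ S. Define f̃_α = (1/|S|) Σ_{φ ∈ S} f̃(φ) exp(−i⟨α, φ⟩), f̂_α = (1/2)(f̃_α + conj(f̃_{−α})), and f̂(θ) = Σ_{α ∈ K} f̂_α exp(i⟨α, θ⟩). Then f̂ is a Hermitian trigonometric polynomial, sup_{θ ∈ ℝ^M} |f̂(θ) − f(θ)| ≤ ε/2, and |min_{θ ∈ [−π,π]^M} f̂(θ) − min_{θ ∈ [−π,π]^M} f(θ)| ≤ ε/2. -/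
open Complex Finset

lemma geom_lemma (d : ℕ) (m : ℤ) (hm : |m| ≤ 2 * d) :
    ∑ t ∈ Finset.Icc (-(d : ℤ)) (d : ℤ),
      Complex.exp (Complex.I * (2 * (Real.pi : ℂ) * (m : ℂ) * (t : ℂ) / (2 * (d : ℂ) + 1))) =
    if m = 0 then ((2 * d + 1 : ℕ) : ℂ) else 0 := by
  have hNne : ((2 * d + 1 : ℕ) : ℂ) ≠ 0 := Nat.cast_ne_zero.mpr (by omega)
  have hNC : (2 * (d : ℂ) + 1) = ((2 * d + 1 : ℕ) : ℂ) := by push_cast; ring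
  by_cases hm0 : m = 0
  · subst hm0
    rw [if_pos rfl]
    have : ∀ t ∈ Finset.Icc (-(d:ℤ)) (d:ℤ), Complex.exp (Complex.I * (2 * (Real.pi : ℂ) * ((0:ℤ) : ℂ) * (t : ℂ) / (2 * (d : ℂ) + 1))) = 1 := by
      intro t _
      rw [show Complex.I * (2 * (Real.pi:ℂ) * ((0:ℤ):ℂ) * (t:ℂ) / (2*(d:ℂ)+1)) = 0 by push_cast; ring]
      exact Complex.exp_zero
    rw [Finset.sum_congr rfl this, Finset.sum_const, nsmul_eq_mul, mul_one]
    congr 1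
    rw [Int.card_Icc]
    omega
  · rw [if_neg hm0]
    set ω : ℂ := Complex.exp (Complex.I * (2 * (Real.pi : ℂ) * (m : ℂ) / (2 * (d : ℂ) + 1))) with hω
    have hωne : ω ≠ 0 := Complex.exp_ne_zero _
    have hpow : ∀ t : ℤ, Complex.exp (Complex.I * (2 * (Real.pi : ℂ) * (m : ℂ) * (t : ℂ) / (2 * (d : ℂ) + 1))) = ω ^ t := by
      intro t
      rw [hω, ← Complex.exp_int_mul]
      congr 1
      have : (2 * (d : ℂ) + 1) ≠ 0 := by rw [hNC]; exact hNne
      field_simp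
    have hωN : ω ^ (2 * d + 1) = 1 := by
      rw [hω, ← Complex.exp_nat_mul]
      rw [show ((2*d+1 : ℕ) : ℂ) * (Complex.I * (2 * (Real.pi:ℂ) * (m:ℂ) / (2*(d:ℂ)+1))) = (m : ℂ) * (2 * (Real.pi:ℂ) * Complex.I) by
        have h0 : (2 * (d : ℂ) + 1) ≠ 0 := by rw [hNC]; exact hNne
        rw [← hNC]; field_simp]
      exact Complex.exp_int_mul_two_pi_mul_I m
    have hω1 : ω ≠ 1 := by
      intro h
      rw [hω, Complex.exp_eq_one_iff] at h
      obtain ⟨n, hn⟩ := h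
      have hNne' : (2 * (d : ℂ) + 1) ≠ 0 := by rw [hNC]; exact hNne
      have hIne : (Complex.I : ℂ) ≠ 0 := Complex.I_ne_zero
      have hπ : (Real.pi : ℂ) ≠ 0 := Complex.ofReal_ne_zero.mpr Real.pi_ne_zero
      have hmn : (m : ℂ) = (n : ℂ) * (2 * (d : ℂ) + 1) := by
        field_simp at hn
        have h2 : (Complex.I * (2 * (Real.pi:ℂ))) * (m:ℂ) = (Complex.I * (2 * (Real.pi:ℂ))) * ((n:ℂ) * (2*(d:ℂ)+1)) := by
          linear_combination (Complex.I * (2 * (Real.pi:ℂ))) * hn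
        exact mul_left_cancel₀ (mul_ne_zero hIne (mul_ne_zero two_ne_zero hπ)) h2
      have hmz : m = n * (2 * (d : ℤ) + 1) := by exact_mod_cast hmn
      rcases eq_or_ne n 0 with rfl | hn0
      · exact hm0 (by omega)
      · have h1 : (1 : ℤ) ≤ |n| := Int.one_le_abs hn0
        have : (2 * (d:ℤ) + 1) ≤ |n| * (2 * d + 1) := le_mul_of_one_le_left (by positivity) h1
        have habs : |m| = |n| * (2 * (d:ℤ) + 1) := by rw [hmz, abs_mul, abs_of_nonneg (show (0:ℤ) ≤ 2*(d:ℤ)+1 by positivity)]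
        omega
    calc ∑ t ∈ Finset.Icc (-(d:ℤ)) (d:ℤ), Complex.exp (Complex.I * (2 * (Real.pi : ℂ) * (m : ℂ) * (t : ℂ) / (2 * (d : ℂ) + 1)))
        = ∑ t ∈ Finset.Icc (-(d:ℤ)) (d:ℤ), ω ^ t := by exact Finset.sum_congr rfl (fun t _ => hpow t)
      _ = ∑ k ∈ Finset.range (2*d+1), ω ^ ((k : ℤ) - d) := by
          rw [show Finset.Icc (-(d:ℤ)) (d:ℤ) = Finset.image (fun k : ℕ => (k : ℤ) - d) (Finset.range (2*d+1)) from ?_]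
          · rw [Finset.sum_image]
            intro a _ b _ h
            have h' : (a:ℤ) - d = (b:ℤ) - d := h
            omega
          · ext x
            simp only [Finset.mem_Icc, Finset.mem_image, Finset.mem_range]
            constructor
            · intro h; exact ⟨(x + d).toNat, by omega, by omega⟩
            · rintro ⟨k, hk, rfl⟩; omega
      _ = ω ^ (-(d:ℤ)) * ∑ k ∈ Finset.range (2*d+1), ω ^ k := by
          rw [Finset.mul_sum]
          refine Finset.sum_congr rfl (fun k _ => ?_)
          rw [sub_eq_add_neg, zpow_add₀ hωne, zpow_natCast, mul_comm]
      _ = 0 := by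
          rw [geom_sum_eq hω1, hωN]
          simp

lemma ortho (M : ℕ) (d : Fin M → ℕ) (γ : Fin M → ℤ) (hγ : ∀ j, |γ j| ≤ 2 * d j) :
    ∑ t ∈ Fintype.piFinset (fun j => Finset.Icc (-(d j : ℤ)) (d j)),
      Complex.exp (Complex.I *
        ((∑ j, (γ j : ℝ) * (2 * Real.pi * (t j : ℝ) / (2 * (d j : ℝ) + 1)) : ℝ) : ℂ)) =
    if γ = 0 then ((Fintype.piFinset (fun j => Finset.Icc (-(d j : ℤ)) (d j))).card : ℂ) else 0 := by
  have hcard : (Fintype.piFinset (fun j => Finset.Icc (-(d j : ℤ)) (d j))).card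
      = ∏ j, (2 * d j + 1) := by
    rw [Fintype.card_piFinset]
    refine Finset.prod_congr rfl (fun j _ => ?_)
    rw [Int.card_Icc]
    omega
  have hterm : ∀ t ∈ Fintype.piFinset (fun j => Finset.Icc (-(d j : ℤ)) (d j)),
      Complex.exp (Complex.I *
        ((∑ j, (γ j : ℝ) * (2 * Real.pi * (t j : ℝ) / (2 * (d j : ℝ) + 1)) : ℝ) : ℂ)) =
      ∏ j, Complex.exp (Complex.I * (2 * (Real.pi : ℂ) * (γ j : ℂ) * ((t j : ℤ) : ℂ) / (2 * (d j : ℂ) + 1))) := by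
    intro t _
    rw [← Complex.exp_sum]
    congr 1
    push_cast
    rw [Finset.mul_sum]
    exact Finset.sum_congr rfl (fun j _ => by ring)
  rw [Finset.sum_congr rfl hterm,
    ← Finset.prod_univ_sum (fun j => Finset.Icc (-(d j : ℤ)) (d j))
      (fun j (x : ℤ) => Complex.exp (Complex.I * (2 * (Real.pi : ℂ) * (γ j : ℂ) * (x : ℂ) / (2 * (d j : ℂ) + 1))))]
  have hinner : ∀ j : Fin M,
      (∑ x ∈ Finset.Icc (-(d j : ℤ)) (d j),
        Complex.exp (Complex.I * (2 * (Real.pi : ℂ) * (γ j : ℂ) * (x : ℂ) / (2 * (d j : ℂ) + 1)))) =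
      if γ j = 0 then ((2 * d j + 1 : ℕ) : ℂ) else 0 := fun j => geom_lemma (d j) (γ j) (hγ j)
  rw [Finset.prod_congr rfl (fun j _ => hinner j)]
  by_cases h0 : γ = 0
  · subst h0
    rw [if_pos rfl, hcard]
    push_cast
    simp
  · rw [if_neg h0]
    obtain ⟨j, hj⟩ : ∃ j, γ j ≠ 0 := by
      by_contra h; push_neg at h; exact h0 (funext h)
    exact Finset.prod_eq_zero (Finset.mem_univ j) (if_neg hj)

lemma sInf_close {X : Type*} (S : Set X) (hS : S.Nonempty) (g f : X → ℝ) (δ m : ℝ)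
    (hm : ∀ x ∈ S, m ≤ f x) (h : ∀ x ∈ S, |g x - f x| ≤ δ) :
    |sInf (g '' S) - sInf (f '' S)| ≤ δ := by
  have hfne : (f '' S).Nonempty := hS.image f
  have hgne : (g '' S).Nonempty := hS.image g
  have hfb : BddBelow (f '' S) := ⟨m, by rintro _ ⟨x, hx, rfl⟩; exact hm x hx⟩
  have hgb : BddBelow (g '' S) := ⟨m - δ, by
    rintro _ ⟨x, hx, rfl⟩
    have h1 := (abs_le.mp (h x hx)).1
    have h2 := hm x hx
    linarith⟩
  rw [abs_sub_le_iff]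
  constructor
  · have h1 : sInf (g '' S) - δ ≤ sInf (f '' S) := by
      apply le_csInf hfne
      rintro _ ⟨x, hx, rfl⟩
      have h1 : sInf (g '' S) ≤ g x := csInf_le hgb ⟨x, hx, rfl⟩
      have h2 := abs_le.mp (h x hx)
      linarith [h2.1]
    linarith
  · have h1 : sInf (f '' S) - δ ≤ sInf (g '' S) := by
      apply le_csInf hgne
      rintro _ ⟨x, hx, rfl⟩
      have h1 : sInf (f '' S) ≤ f x := csInf_le hfb ⟨x, hx, rfl⟩
      have h2 := abs_le.mp (h x hx)
      linarith [h2.2]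
    linarith




/-- let `f` (real-valued) be a Hermitian trigonometric polynomial with
coefficients `c` supported on the box `K = {α ∈ ℤ^M : |α_j| ≤ d_j}`, let `f̃` be real values
on the uniform sampling grid (with `N_j = 2 d_j + 1` points per coordinate) satisfying
`|f̃(φ) - f(φ)| ≤ ε/(2|K|)`, define the DFT coefficients `c̃_α`, their symmetrizations
`ĉ_α = (c̃_α + conj (c̃_{-α}))/2`, and `f̂(θ) = Σ_{α ∈ K} ĉ_α exp(i⟨α, θ⟩)`.  Then `f̂` is a
Hermitian trigonometric polynomial (`ĉ_{-α} = conj (ĉ_α)`), `|f̂(θ) - f(θ)| ≤ ε/2` uniformly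
in `θ`, and the minima of `f̂` and `f` over `[-π, π]^M` differ by at most `ε/2`. -/
theorem stmt8 (M : ℕ) (d : Fin M → ℕ) (ε : ℝ) (hε : 0 < ε)
    (c : (Fin M → ℤ) → ℂ)
    (hsupp : ∀ α ∉ Fintype.piFinset (fun j => Finset.Icc (-(d j : ℤ)) (d j)), c α = 0)
    (hherm : ∀ α : Fin M → ℤ, c (-α) = (starRingEnd ℂ) (c α))
    (f : (Fin M → ℝ) → ℝ)
    (hf : ∀ θ : Fin M → ℝ,
      (f θ : ℂ) = ∑ α ∈ Fintype.piFinset (fun j => Finset.Icc (-(d j : ℤ)) (d j)),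
        c α * Complex.exp (Complex.I * ((∑ j, (α j : ℝ) * θ j : ℝ) : ℂ)))
    (ftilde : (Fin M → ℝ) → ℝ)
    (happrox : ∀ t ∈ Fintype.piFinset (fun j => Finset.Icc (-(d j : ℤ)) (d j)),
      |ftilde (fun j => 2 * Real.pi * (t j : ℝ) / (2 * (d j : ℝ) + 1)) -
        f (fun j => 2 * Real.pi * (t j : ℝ) / (2 * (d j : ℝ) + 1))| ≤
      ε / (2 * ((Fintype.piFinset (fun j => Finset.Icc (-(d j : ℤ)) (d j))).card : ℝ)))
    (ctilde : (Fin M → ℤ) → ℂ)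
    (hctilde : ∀ α : Fin M → ℤ,
      ctilde α = (1 / ((Fintype.piFinset (fun j => Finset.Icc (-(d j : ℤ)) (d j))).card : ℂ)) *
        ∑ t ∈ Fintype.piFinset (fun j => Finset.Icc (-(d j : ℤ)) (d j)),
          (ftilde (fun j => 2 * Real.pi * (t j : ℝ) / (2 * (d j : ℝ) + 1)) : ℂ) *
            Complex.exp (-Complex.I *
              ((∑ j, (α j : ℝ) * (2 * Real.pi * (t j : ℝ) / (2 * (d j : ℝ) + 1)) : ℝ) : ℂ)))
    (chat : (Fin M → ℤ) → ℂ)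
    (hchat : ∀ α : Fin M → ℤ, chat α = (ctilde α + (starRingEnd ℂ) (ctilde (-α))) / 2)
    (fhat : (Fin M → ℝ) → ℂ)
    (hfhat : ∀ θ : Fin M → ℝ,
      fhat θ = ∑ α ∈ Fintype.piFinset (fun j => Finset.Icc (-(d j : ℤ)) (d j)),
        chat α * Complex.exp (Complex.I * ((∑ j, (α j : ℝ) * θ j : ℝ) : ℂ))) :
    (∀ α : Fin M → ℤ, chat (-α) = (starRingEnd ℂ) (chat α)) ∧
    (∀ θ : Fin M → ℝ, ‖fhat θ - (f θ : ℂ)‖ ≤ ε / 2) ∧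
    |sInf ((fun θ => (fhat θ).re) ''
        {θ : Fin M → ℝ | ∀ j, θ j ∈ Set.Icc (-Real.pi) Real.pi}) -
      sInf (f '' {θ : Fin M → ℝ | ∀ j, θ j ∈ Set.Icc (-Real.pi) Real.pi})| ≤ ε / 2 := by
  classical
  set K := Fintype.piFinset (fun j => Finset.Icc (-(d j : ℤ)) (d j)) with hK
  -- basic facts
  have hKne : K.Nonempty := ⟨fun _ => 0, by
    rw [hK, Fintype.mem_piFinset]; intro j; simp⟩
  have hKpos : 0 < K.card := Finset.card_pos.mpr hKne
  have hKposR : 0 < (K.card : ℝ) := by exact_mod_cast hKpos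
  have hKneC : (K.card : ℂ) ≠ 0 := Nat.cast_ne_zero.mpr hKpos.ne'
  have hmemK : ∀ α : Fin M → ℤ, α ∈ K ↔ ∀ j, -(d j : ℤ) ≤ α j ∧ α j ≤ d j := by
    intro α
    rw [hK, Fintype.mem_piFinset]
    simp [Finset.mem_Icc]
  -- hermitian symmetry of chat
  have hherm' : ∀ α : Fin M → ℤ, chat (-α) = (starRingEnd ℂ) (chat α) := by
    intro α
    rw [hchat, hchat, neg_neg, map_div₀, map_add]
    simp only [Complex.conj_conj, map_ofNat]
    ring
  -- abs of exponentials
  have habse : ∀ x : ℝ, ‖Complex.exp (-Complex.I * (x : ℂ))‖ = 1 := by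
    intro x
    rw [show -Complex.I * (x : ℂ) = ((-x : ℝ) : ℂ) * Complex.I by push_cast; ring,
      Complex.norm_exp_ofReal_mul_I]
  have habse' : ∀ x : ℝ, ‖Complex.exp (Complex.I * (x : ℂ))‖ = 1 := by
    intro x
    rw [mul_comm, Complex.norm_exp_ofReal_mul_I]
  -- orthogonality in the needed form
  have horth : ∀ α ∈ K, ∀ β ∈ K,
      ∑ t ∈ K, Complex.exp (Complex.I *
          ((∑ j, (β j : ℝ) * (2 * Real.pi * (t j : ℝ) / (2 * (d j : ℝ) + 1)) : ℝ) : ℂ)) *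
        Complex.exp (-Complex.I *
          ((∑ j, (α j : ℝ) * (2 * Real.pi * (t j : ℝ) / (2 * (d j : ℝ) + 1)) : ℝ) : ℂ)) =
      if β = α then (K.card : ℂ) else 0 := by
    intro α hα β hβ
    have hγ : ∀ j, |(β - α) j| ≤ 2 * d j := by
      intro j
      have h1 := (hmemK α).mp hα j
      have h2 := (hmemK β).mp hβ j
      simp only [Pi.sub_apply]
      rw [abs_le]
      omega
    have horth0 := ortho M d (β - α) hγ
    rw [← hK] at horth0
    calc ∑ t ∈ K, Complex.exp (Complex.I *
            ((∑ j, (β j : ℝ) * (2 * Real.pi * (t j : ℝ) / (2 * (d j : ℝ) + 1)) : ℝ) : ℂ)) *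
          Complex.exp (-Complex.I *
            ((∑ j, (α j : ℝ) * (2 * Real.pi * (t j : ℝ) / (2 * (d j : ℝ) + 1)) : ℝ) : ℂ))
        = ∑ t ∈ K, Complex.exp (Complex.I *
            ((∑ j, ((β - α) j : ℝ) * (2 * Real.pi * (t j : ℝ) / (2 * (d j : ℝ) + 1)) : ℝ) : ℂ)) := by
          refine Finset.sum_congr rfl fun t _ => ?_
          rw [← Complex.exp_add]
          congr 1
          push_cast [Pi.sub_apply]
          rw [Finset.mul_sum, Finset.mul_sum, Finset.mul_sum, ← Finset.sum_add_distrib]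
          exact Finset.sum_congr rfl fun j _ => by ring
      _ = if β - α = 0 then (K.card : ℂ) else 0 := horth0
      _ = if β = α then (K.card : ℂ) else 0 := by simp only [sub_eq_zero]
  -- exact DFT inversion
  have hdft : ∀ α ∈ K,
      ∑ t ∈ K, ((f (fun j => 2 * Real.pi * (t j : ℝ) / (2 * (d j : ℝ) + 1)) : ℝ) : ℂ) *
        Complex.exp (-Complex.I *
          ((∑ j, (α j : ℝ) * (2 * Real.pi * (t j : ℝ) / (2 * (d j : ℝ) + 1)) : ℝ) : ℂ)) =
      (K.card : ℂ) * c α := by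
    intro α hα
    calc ∑ t ∈ K, ((f (fun j => 2 * Real.pi * (t j : ℝ) / (2 * (d j : ℝ) + 1)) : ℝ) : ℂ) *
          Complex.exp (-Complex.I *
            ((∑ j, (α j : ℝ) * (2 * Real.pi * (t j : ℝ) / (2 * (d j : ℝ) + 1)) : ℝ) : ℂ))
        = ∑ t ∈ K, ∑ β ∈ K, c β *
            (Complex.exp (Complex.I *
              ((∑ j, (β j : ℝ) * (2 * Real.pi * (t j : ℝ) / (2 * (d j : ℝ) + 1)) : ℝ) : ℂ)) *
            Complex.exp (-Complex.I *
              ((∑ j, (α j : ℝ) * (2 * Real.pi * (t j : ℝ) / (2 * (d j : ℝ) + 1)) : ℝ) : ℂ))) := by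
          refine Finset.sum_congr rfl fun t _ => ?_
          rw [hf]
          rw [Finset.sum_mul]
          exact Finset.sum_congr rfl fun β _ => by ring
      _ = ∑ β ∈ K, c β * ∑ t ∈ K,
            Complex.exp (Complex.I *
              ((∑ j, (β j : ℝ) * (2 * Real.pi * (t j : ℝ) / (2 * (d j : ℝ) + 1)) : ℝ) : ℂ)) *
            Complex.exp (-Complex.I *
              ((∑ j, (α j : ℝ) * (2 * Real.pi * (t j : ℝ) / (2 * (d j : ℝ) + 1)) : ℝ) : ℂ)) := by
          rw [Finset.sum_comm]
          exact Finset.sum_congr rfl fun β _ => by rw [Finset.mul_sum]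
      _ = ∑ β ∈ K, c β * (if β = α then (K.card : ℂ) else 0) := by
          exact Finset.sum_congr rfl fun β hβ => by rw [horth α hα β hβ]
      _ = (K.card : ℂ) * c α := by
          simp only [mul_ite, mul_zero]
          rw [Finset.sum_ite_eq' K α (fun β => c β * (K.card : ℂ)), if_pos hα, mul_comm]
  -- coefficient error for ctilde
  have hcterr : ∀ α ∈ K, ‖ctilde α - c α‖ ≤ ε / (2 * (K.card : ℝ)) := by
    intro α hα
    have hsplit : ctilde α - c α = (1 / (K.card : ℂ)) *
        ∑ t ∈ K, ((ftilde (fun j => 2 * Real.pi * (t j : ℝ) / (2 * (d j : ℝ) + 1)) -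
            f (fun j => 2 * Real.pi * (t j : ℝ) / (2 * (d j : ℝ) + 1)) : ℝ) : ℂ) *
          Complex.exp (-Complex.I *
            ((∑ j, (α j : ℝ) * (2 * Real.pi * (t j : ℝ) / (2 * (d j : ℝ) + 1)) : ℝ) : ℂ)) := by
      rw [hctilde α]
      have : ∑ t ∈ K, ((ftilde (fun j => 2 * Real.pi * (t j : ℝ) / (2 * (d j : ℝ) + 1)) : ℝ) : ℂ) *
          Complex.exp (-Complex.I *
            ((∑ j, (α j : ℝ) * (2 * Real.pi * (t j : ℝ) / (2 * (d j : ℝ) + 1)) : ℝ) : ℂ)) =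
          (∑ t ∈ K, ((ftilde (fun j => 2 * Real.pi * (t j : ℝ) / (2 * (d j : ℝ) + 1)) -
            f (fun j => 2 * Real.pi * (t j : ℝ) / (2 * (d j : ℝ) + 1)) : ℝ) : ℂ) *
          Complex.exp (-Complex.I *
            ((∑ j, (α j : ℝ) * (2 * Real.pi * (t j : ℝ) / (2 * (d j : ℝ) + 1)) : ℝ) : ℂ))) +
          (K.card : ℂ) * c α := by
        rw [← hdft α hα, ← Finset.sum_add_distrib]
        refine Finset.sum_congr rfl fun t _ => ?_
        push_cast
        ring
      rw [this, mul_add]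
      rw [show (1 / (K.card : ℂ)) * ((K.card : ℂ) * c α) = c α by field_simp]
      ring
    rw [hsplit, norm_mul]
    have h1 : ‖1 / (K.card : ℂ)‖ = 1 / (K.card : ℝ) := by
      rw [norm_div, norm_one, Complex.norm_natCast]
    rw [h1]
    have h2 : ‖∑ t ∈ K, ((ftilde (fun j => 2 * Real.pi * (t j : ℝ) / (2 * (d j : ℝ) + 1)) -
            f (fun j => 2 * Real.pi * (t j : ℝ) / (2 * (d j : ℝ) + 1)) : ℝ) : ℂ) *
          Complex.exp (-Complex.I *
            ((∑ j, (α j : ℝ) * (2 * Real.pi * (t j : ℝ) / (2 * (d j : ℝ) + 1)) : ℝ) : ℂ))‖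
        ≤ (K.card : ℝ) * (ε / (2 * (K.card : ℝ))) := by
      refine le_trans (norm_sum_le _ _) ?_
      have hb : ∀ t ∈ K, ‖((ftilde (fun j => 2 * Real.pi * (t j : ℝ) / (2 * (d j : ℝ) + 1)) -
            f (fun j => 2 * Real.pi * (t j : ℝ) / (2 * (d j : ℝ) + 1)) : ℝ) : ℂ) *
          Complex.exp (-Complex.I *
            ((∑ j, (α j : ℝ) * (2 * Real.pi * (t j : ℝ) / (2 * (d j : ℝ) + 1)) : ℝ) : ℂ))‖
          ≤ ε / (2 * (K.card : ℝ)) := by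
        intro t ht
        rw [norm_mul, Complex.norm_real, Real.norm_eq_abs, habse, mul_one]
        exact happrox t ht
      refine le_trans (Finset.sum_le_sum hb) ?_
      rw [Finset.sum_const, nsmul_eq_mul]
    calc (1 / (K.card : ℝ)) * ‖_‖ ≤ (1 / (K.card : ℝ)) * ((K.card : ℝ) * (ε / (2 * (K.card : ℝ)))) := by
          exact mul_le_mul_of_nonneg_left h2 (by positivity)
      _ = ε / (2 * (K.card : ℝ)) := by field_simp
  -- chat error
  have hnegK : ∀ α ∈ K, -α ∈ K := by
    intro α hα
    rw [hmemK] at hα ⊢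
    intro j
    have := hα j
    simp only [Pi.neg_apply]
    omega
  have hchaterr : ∀ α ∈ K, ‖chat α - c α‖ ≤ ε / (2 * (K.card : ℝ)) := by
    intro α hα
    have hcc : (starRingEnd ℂ) (c (-α)) = c α := by
      rw [hherm α, Complex.conj_conj]
    have heq : chat α - c α =
        ((ctilde α - c α) + (starRingEnd ℂ) (ctilde (-α) - c (-α))) / 2 := by
      rw [hchat α, map_sub, hcc]
      ring
    rw [heq, norm_div]
    have h2 : ‖(2:ℂ)‖ = 2 := by norm_num
    rw [h2]
    have hle := norm_add_le (ctilde α - c α) ((starRingEnd ℂ) (ctilde (-α) - c (-α)))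
    rw [Complex.norm_conj] at hle
    have ha := hcterr α hα
    have hb := hcterr (-α) (hnegK α hα)
    calc ‖(ctilde α - c α) + (starRingEnd ℂ) (ctilde (-α) - c (-α))‖ / 2
        ≤ (‖ctilde α - c α‖ + ‖ctilde (-α) - c (-α)‖) / 2 := by linarith
      _ ≤ ε / (2 * (K.card : ℝ)) := by linarith
  -- uniform bound
  have huni : ∀ θ : Fin M → ℝ, ‖fhat θ - (f θ : ℂ)‖ ≤ ε / 2 := by
    intro θ
    have heq : fhat θ - (f θ : ℂ) = ∑ α ∈ K, (chat α - c α) *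
        Complex.exp (Complex.I * ((∑ j, (α j : ℝ) * θ j : ℝ) : ℂ)) := by
      rw [hfhat θ, hf θ, ← Finset.sum_sub_distrib]
      exact Finset.sum_congr rfl fun α _ => by ring
    rw [heq]
    refine le_trans (norm_sum_le _ _) ?_
    have hb : ∀ α ∈ K, ‖(chat α - c α) *
        Complex.exp (Complex.I * ((∑ j, (α j : ℝ) * θ j : ℝ) : ℂ))‖ ≤ ε / (2 * (K.card : ℝ)) := by
      intro α hα
      rw [norm_mul, habse', mul_one]
      exact hchaterr α hα
    refine le_trans (Finset.sum_le_sum hb) ?_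
    rw [Finset.sum_const, nsmul_eq_mul]
    rw [show (K.card : ℝ) * (ε / (2 * (K.card : ℝ))) = ε / 2 by field_simp]
  refine ⟨hherm', huni, ?_⟩
  -- sInf part
  have hSne : ({θ : Fin M → ℝ | ∀ j, θ j ∈ Set.Icc (-Real.pi) Real.pi}).Nonempty := by
    exact ⟨fun _ => 0, fun j => Set.mem_Icc.mpr ⟨neg_nonpos.mpr Real.pi_pos.le, Real.pi_pos.le⟩⟩
  refine sInf_close _ hSne (fun θ => (fhat θ).re) f (ε / 2)
    (-(∑ α ∈ K, ‖c α‖)) (fun θ _ => ?_) (fun θ _ => ?_)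
  · -- lower bound on f
    have h1 : |f θ| ≤ ∑ α ∈ K, ‖c α‖ := by
      rw [← Real.norm_eq_abs, ← Complex.norm_real, hf θ]
      refine le_trans (norm_sum_le _ _) (Finset.sum_le_sum fun α _ => ?_)
      rw [norm_mul, habse', mul_one]
    have := abs_le.mp h1
    linarith [this.1]
  · -- pointwise closeness of real parts
    have h1 : |(fhat θ).re - f θ| = |((fhat θ - (f θ : ℂ)).re)| := by
      simp [Complex.sub_re]
    rw [h1]
    exact le_trans (Complex.abs_re_le_norm _) (huni θ)
end

section
/- Let ℓ, M ∈ ℕ with M ≥ 1, let A_ℓ = {α ∈ ℕ^M : α_i ≤ ℓ for all i} and A_{ℓ+1} = {α ∈ ℕ^M : α_i ≤ ℓ+1 for all i}, and let z_α ∈ ℂ^R for α ∈ A_{ℓ+1} satisfy: (i) span{z_α : α ∈ A_ℓ} = ℂ^R, and (ii) the Toeplitz Gram condition ⟨z_{α + e_j}, z_{β + e_j}⟩ = ⟨z_α, z_β⟩ for every j ∈ {1,…,M} and all α, β ∈ A_{ℓ+1} with α_j ≤ ℓ and β_j ≤ ℓ. Then there exist unitary operators T_1, …, T_M on ℂ^R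 that pairwise commute (T_i T_j = T_j T_i for all i, j) and satisfy T_j z_α = z_{α + e_j} for every j and every α ∈ A_{ℓ+1} with α_j ≤ ℓ. -/
/-- given Gram vectors `z α ∈ ℂ^R` for `α ∈ A_{ℓ+1} = {α : α i ≤ ℓ+1}` such that
the vectors indexed by `A_ℓ` span `ℂ^R` and the Toeplitz Gram condition holds, there exist
pairwise commuting unitary (inner-product preserving) operators `T 1, …, T M` on `ℂ^R` with
`T j (z α) = z (α + e j)` whenever `α ∈ A_{ℓ+1}` and `α j ≤ ℓ`. -/
theorem stmt12 (M R ℓ : ℕ) (hM : 1 ≤ M)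
    (z : (Fin M → ℕ) → EuclideanSpace ℂ (Fin R))
    (hspan : Submodule.span ℂ (z '' {α : Fin M → ℕ | ∀ i, α i ≤ ℓ}) = ⊤)
    (htoep : ∀ j : Fin M, ∀ α β : Fin M → ℕ,
      (∀ i, α i ≤ ℓ + 1) → (∀ i, β i ≤ ℓ + 1) → α j ≤ ℓ → β j ≤ ℓ →
      (inner ℂ (z (α + Pi.single j 1)) (z (β + Pi.single j 1)) : ℂ) = inner ℂ (z α) (z β)) :
    ∃ T : Fin M → (EuclideanSpace ℂ (Fin R) →ₗ[ℂ] EuclideanSpace ℂ (Fin R)),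
      (∀ j, ∀ u v : EuclideanSpace ℂ (Fin R), (inner ℂ (T j u) (T j v) : ℂ) = inner ℂ u v) ∧
      (∀ i j, T i ∘ₗ T j = T j ∘ₗ T i) ∧
      (∀ j : Fin M, ∀ α : Fin M → ℕ, (∀ i, α i ≤ ℓ + 1) → α j ≤ ℓ →
        T j (z α) = z (α + Pi.single j 1)) := by
  classical

  obtain ⟨s, hsub, hspan', hli⟩ :=
    exists_linearIndependent ℂ (z '' {α : Fin M → ℕ | ∀ i, α i ≤ ℓ})
  rw [hspan] at hspan'
  have hli' : LinearIndependent ℂ (fun x : s => (x : EuclideanSpace ℂ (Fin R))) := hli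
  let b : Module.Basis s ℂ (EuclideanSpace ℂ (Fin R)) := Module.Basis.mk hli' (by rw [Subtype.range_coe, hspan'])
  have hpick : ∀ x : s, ∃ α : Fin M → ℕ, (∀ i, α i ≤ ℓ) ∧ z α = x := by
    intro x
    obtain ⟨α, hα, hz⟩ := hsub x.2
    exact ⟨α, hα, hz⟩
  choose idx hidx hzidx using hpick
  have hbx : ∀ x : s, b x = z (idx x) := by
    intro x; rw [Module.Basis.mk_apply]; exact (hzidx x).symm
  have hA1 : ∀ x : s, ∀ i, idx x i ≤ ℓ + 1 := fun x i => (hidx x i).trans (Nat.le_succ ℓ)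
  have hshift : ∀ (α : Fin M → ℕ) (j : Fin M), (∀ i, α i ≤ ℓ + 1) → α j ≤ ℓ →
      ∀ i, (α + Pi.single j 1 : Fin M → ℕ) i ≤ ℓ + 1 := by
    intro α j hα hαj i
    simp only [Pi.add_apply, Pi.single_apply]
    rcases eq_or_ne i j with h | h
    · subst h; simp; omega
    · simp [h]; exact hα i
  have hshift' : ∀ (α : Fin M → ℕ) (j i : Fin M), i ≠ j → (α + Pi.single j 1 : Fin M → ℕ) i = α i := by
    intro α j i hij
    simp [Pi.single_apply, hij]
  let T : Fin M → (EuclideanSpace ℂ (Fin R) →ₗ[ℂ] EuclideanSpace ℂ (Fin R)) := fun j => b.constr ℂ (fun x => z (idx x + Pi.single j 1))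
  have hTb : ∀ (j : Fin M) (x : s), T j (b x) = z (idx x + Pi.single j 1) := by
    intro j x; exact b.constr_basis _ _ _
  -- Step B : ⟨T j (b x), T j v⟩ = ⟨b x, v⟩
  have stepB : ∀ (j : Fin M) (x : s) (v : EuclideanSpace ℂ (Fin R)),
      (inner ℂ (T j (b x)) (T j v) : ℂ) = inner ℂ (b x) v := by
    intro j x v
    have heq : (innerSL ℂ (T j (b x))).toLinearMap ∘ₗ T j = (innerSL ℂ ((b x : EuclideanSpace ℂ (Fin R)))).toLinearMap := by
      apply b.ext
      intro y
      simp only [LinearMap.comp_apply, ContinuousLinearMap.coe_coe, innerSL_apply_apply]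
      rw [hTb, hTb, hbx, hbx]
      exact htoep j (idx x) (idx y) (hA1 x) (hA1 y) (hidx x j) (hidx y j)
    have := DFunLike.congr_fun heq v
    simpa using this
  -- Step C : full inner ℂ product preservation
  have stepC : ∀ (j : Fin M) (u v : EuclideanSpace ℂ (Fin R)), (inner ℂ (T j u) (T j v) : ℂ) = inner ℂ u v := by
    intro j u v
    have heq : (innerSL ℂ (T j u)).toLinearMap ∘ₗ T j = (innerSL ℂ u).toLinearMap := by
      apply b.ext
      intro y
      simp only [LinearMap.comp_apply, ContinuousLinearMap.coe_coe, innerSL_apply_apply]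
      calc (inner ℂ (T j u) (T j (b y)) : ℂ)
          = starRingEnd ℂ (inner ℂ (T j (b y)) (T j u)) := by rw [inner_conj_symm]
        _ = starRingEnd ℂ (inner ℂ ((b y : EuclideanSpace ℂ (Fin R))) u) := by rw [stepB]
        _ = inner ℂ u (b y) := by rw [inner_conj_symm]
    have := DFunLike.congr_fun heq v
    simpa using this
  -- Step D : the intertwining property for all admissible α
  have stepD : ∀ (j : Fin M) (α : Fin M → ℕ), (∀ i, α i ≤ ℓ + 1) → α j ≤ ℓ →
      T j (z α) = z (α + Pi.single j 1) := by
    intro j α hα hαj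
    set w := z (α + Pi.single j 1) with hw
    -- ⟨w, T j (z α)⟩ = ⟨w, w⟩
    have key : (inner ℂ w (T j (z α)) : ℂ) = inner ℂ w w := by
      have heq : (innerSL ℂ w).toLinearMap ∘ₗ T j = (innerSL ℂ (z α)).toLinearMap := by
        apply b.ext
        intro y
        simp only [LinearMap.comp_apply, ContinuousLinearMap.coe_coe, innerSL_apply_apply]
        rw [hTb, hbx, hw]
        exact htoep j α (idx y) hα (hA1 y) hαj (hidx y j)
      have h1 := DFunLike.congr_fun heq (z α)
      simp only [LinearMap.comp_apply, ContinuousLinearMap.coe_coe, innerSL_apply_apply] at h1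
      rw [h1, hw]
      exact (htoep j α α hα hα hαj hαj).symm
    have hww : (inner ℂ (T j (z α)) (T j (z α)) : ℂ) = inner ℂ w w := by
      rw [stepC, hw]
      exact (htoep j α α hα hα hαj hαj).symm
    have key' : (inner ℂ (T j (z α)) w : ℂ) = inner ℂ w w := by
      calc (inner ℂ (T j (z α)) w : ℂ) = starRingEnd ℂ (inner ℂ w (T j (z α))) := by
            rw [inner_conj_symm]
        _ = starRingEnd ℂ (inner ℂ w w) := by rw [key]
        _ = inner ℂ w w := by rw [inner_conj_symm]
    have hzero : (inner ℂ (T j (z α) - w) (T j (z α) - w) : ℂ) = 0 := by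
      rw [inner_sub_sub_self, hww, key, key']
      ring
    have := inner_self_eq_zero.mp hzero
    have hd : T j (z α) - w = 0 := this
    rw [sub_eq_zero] at hd
    exact hd
  refine ⟨T, stepC, ?_, stepD⟩
  intro i j
  rcases eq_or_ne i j with h | h
  · rw [h]
  · apply b.ext
    intro y
    simp only [LinearMap.comp_apply]
    rw [hbx, stepD j (idx y) (hA1 y) (hidx y j),
      stepD i (idx y + Pi.single j 1) (hshift _ j (hA1 y) (hidx y j))
        (by rw [hshift' _ j i h]; exact hidx y i),
      stepD i (idx y) (hA1 y) (hidx y i),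
      stepD j (idx y + Pi.single i 1) (hshift _ i (hA1 y) (hidx y i))
        (by rw [hshift' _ i j (Ne.symm h)]; exact hidx y j)]
    rw [add_assoc, add_assoc, add_comm (Pi.single j 1)]
end
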